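/- Partial derivative of body-fixed instantaneous joint screws: with C_i(q) = exp(Ŷ₁q₁)···exp(Ŷᵢqᵢ)Aᵢ and J^b_{i,j} = Ad_{C_i⁻¹C_j A_j⁻¹} Y_j, one has ∂J^b_{i,j}/∂q_k = [J^b_{i,j}, J^b_{i,k}] for j < k ≤ i. -/

import Mathlib

open Matrix

noncomputable section

/-- The 3×3 skew-symmetric matrix `ṽ` of a vector `v ∈ ℝ³`, satisfying `ṽ y = v × y`. -/
def skew (v : Fin 3 → ℝ) : Matrix (Fin 3) (Fin 3) ℝ :=
  !![0, -v 2, v 1; v 2, 0, -v 0; -v 1, v 0, 0]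

/-- The 4×4 matrix `X̂ = [[ξ̃, η],[0,0]]` of a screw `X = (ξ, η) ∈ ℝ⁶`. -/
def hat (ξ η : Fin 3 → ℝ) : Matrix (Fin 3 ⊕ Fin 1) (Fin 3 ⊕ Fin 1) ℝ :=
  Matrix.fromBlocks (skew ξ) (Matrix.of fun i _ => η i) 0 0

/-- The 6×6 adjoint matrix `Ad_C = [[R,0],[r̃R,R]]` of `C = (R, r) ∈ SE(3)`. -/
def AdM (R : Matrix (Fin 3) (Fin 3) ℝ) (r : Fin 3 → ℝ) :
    Matrix (Fin 3 ⊕ Fin 3) (Fin 3 ⊕ Fin 3) ℝ :=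
  Matrix.fromBlocks R 0 (skew r * R) R

/-- The 6×6 matrix `ad_X = [[ξ̃,0],[η̃,ξ̃]]` of a screw `X = (ξ, η)`. -/
def adM (ξ η : Fin 3 → ℝ) : Matrix (Fin 3 ⊕ Fin 3) (Fin 3 ⊕ Fin 3) ℝ :=
  Matrix.fromBlocks (skew ξ) 0 (skew η) (skew ξ)

/-- The screw product (Lie bracket) in vector notation on `ℝ⁶ = ℝ³ × ℝ³`. -/
def br (X Y : (Fin 3 → ℝ) × (Fin 3 → ℝ)) : (Fin 3 → ℝ) × (Fin 3 → ℝ) :=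
  (X.1 ⨯₃ Y.1, X.2 ⨯₃ Y.1 + X.1 ⨯₃ Y.2)

/-- The action of `Ad_C` on a screw `(ξ, η) ∈ ℝ⁶` for `C = (R, r)`. -/
def AdAct (R : Matrix (Fin 3) (Fin 3) ℝ) (r : Fin 3 → ℝ)
    (X : (Fin 3 → ℝ) × (Fin 3 → ℝ)) : (Fin 3 → ℝ) × (Fin 3 → ℝ) :=
  (R *ᵥ X.1, skew r *ᵥ (R *ᵥ X.1) + R *ᵥ X.2)

/-- A 4×4 matrix is an element of `se(3)`. -/
def IsSE3 (M : Matrix (Fin 3 ⊕ Fin 1) (Fin 3 ⊕ Fin 1) ℝ) : Prop :=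
  ∃ (W : Matrix (Fin 3) (Fin 3) ℝ) (v : Fin 3 → ℝ),
    Wᵀ = -W ∧ M = Matrix.fromBlocks W (Matrix.of fun i _ => v i) 0 0

/-- A 4×4 matrix is an element of `SE(3)`, i.e. of the form `[[R, r],[0,1]]` with
`R ∈ SO(3)`. -/
def IsSE3Grp (M : Matrix (Fin 3 ⊕ Fin 1) (Fin 3 ⊕ Fin 1) ℝ) : Prop :=
  ∃ (R : Matrix (Fin 3) (Fin 3) ℝ) (r : Fin 3 → ℝ),
    Rᵀ * R = 1 ∧ R.det = 1 ∧ M = Matrix.fromBlocks R (Matrix.of fun i _ => r i) 0 1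

/-- The partial product of exponentials `exp(Ŷ₁q₁)⋯exp(Ŷ_mq_m)` (joints `1,…,m`). -/
def poe (Y : ℕ → Matrix (Fin 3 ⊕ Fin 1) (Fin 3 ⊕ Fin 1) ℝ) (q : ℕ → ℝ) (m : ℕ) :
    Matrix (Fin 3 ⊕ Fin 1) (Fin 3 ⊕ Fin 1) ℝ :=
  (((List.range m).map fun j => NormedSpace.exp (q (j + 1) • Y (j + 1))).prod)

/-- The configuration `C_i(q) = exp(Ŷ₁q₁)⋯exp(Ŷᵢqᵢ) Aᵢ` of body `i`. -/
def conf (Y A : ℕ → Matrix (Fin 3 ⊕ Fin 1) (Fin 3 ⊕ Fin 1) ℝ) (q : ℕ → ℝ) (i : ℕ) :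
    Matrix (Fin 3 ⊕ Fin 1) (Fin 3 ⊕ Fin 1) ℝ :=
  poe Y q i * A i

/-- The matrix `Ĵ^b_{i,j} = C_i⁻¹ C_j A_j⁻¹ Ŷ_j A_j C_j⁻¹ C_i` of the body-fixed
instantaneous screw of joint `j` for body `i`. -/
def Jb (Y A : ℕ → Matrix (Fin 3 ⊕ Fin 1) (Fin 3 ⊕ Fin 1) ℝ) (q : ℕ → ℝ) (i j : ℕ) :
    Matrix (Fin 3 ⊕ Fin 1) (Fin 3 ⊕ Fin 1) ℝ :=
  (conf Y A q i)⁻¹ * conf Y A q j * (A j)⁻¹ * Y j * A j * (conf Y A q j)⁻¹ * conf Y A q i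

/-!
Only the factor `exp(Ŷ_k q_k)` of `C_i` depends on `q_k`, and `C_j` does not depend on it at
all for `j < k`, so `J^b_{i,j} = C_i⁻¹ S_j C_i` with the spatial screw
`S_j = C_j A_j⁻¹ Ŷ_j A_j C_j⁻¹` constant in `q_k`. Since `exp(Ŷ_k q_k)` commutes with `Ŷ_k`,
`∂C_i/∂q_k = S_k C_i`, and for any curve with `g' = Z g` one has
`(g⁻¹ S g)' = [g⁻¹ S g, g⁻¹ Z g]`; finally `C_i⁻¹ S_k C_i = J^b_{i,k}`.
-/

open NormedSpace Function

theorem HasDerivAt.ringInverse_mul_mul {𝔸 : Type*} [NormedRing 𝔸]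
    [NormedAlgebra ℝ 𝔸] [HasSummableGeomSeries 𝔸] {g : ℝ → 𝔸} {Z : 𝔸} {t : ℝ} (S : 𝔸)
    (hg : HasDerivAt g (Z * g t) t) (hu : IsUnit (g t)) :
    HasDerivAt (fun s => Ring.inverse (g s) * S * g s)
      (Ring.inverse (g t) * S * g t * (Ring.inverse (g t) * Z * g t)
        - Ring.inverse (g t) * Z * g t * (Ring.inverse (g t) * S * g t)) t := by
  obtain ⟨u, hu⟩ := hu
  have hinv : HasDerivAt (fun s => Ring.inverse (g s)) (-(↑u⁻¹ * (Z * g t) * ↑u⁻¹)) t := by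
    simpa using (hu ▸ hasFDerivAt_ringInverse (𝕜 := ℝ) u).comp_hasDerivAt t hg
  refine ((hinv.mul_const S).mul hg).congr_deriv ?_
  rw [← hu, Ring.inverse_unit]
  simp only [neg_mul, mul_assoc, Units.mul_inv_cancel_left]
  abel

theorem IsSE3Grp.isUnit_det {M : Matrix (Fin 3 ⊕ Fin 1) (Fin 3 ⊕ Fin 1) ℝ} (hM : IsSE3Grp M) :
    IsUnit M.det := by
  obtain ⟨R, r, -, hdet, rfl⟩ := hM
  simp [hdet]

section Screws

variable (Y A : ℕ → Matrix (Fin 3 ⊕ Fin 1) (Fin 3 ⊕ Fin 1) ℝ) (q : ℕ → ℝ)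

theorem poe_succ (m : ℕ) : poe Y q (m + 1) = poe Y q m * exp (q (m + 1) • Y (m + 1)) := by
  simp [poe, List.range_succ]

theorem isUnit_poe (m : ℕ) : IsUnit (poe Y q m) := by
  induction m with
  | zero => exact isUnit_one
  | succ m ih => rw [poe_succ]; exact ih.mul (Matrix.isUnit_exp _)

theorem poe_update_of_lt {k n : ℕ} (s : ℝ) (hn : n < k) : poe Y (update q k s) n = poe Y q n := by
  unfold poe
  congr 1
  refine List.map_congr_left fun x hx => ?_
  rw [update_of_ne (by grind)]

theorem exists_poe_update_eq {m i : ℕ} (hi : m < i) :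
    ∃ T, ∀ s, poe Y (update q (m + 1) s) i = poe Y q m * exp (s • Y (m + 1)) * T := by
  induction i, hi using Nat.le_induction with
  | base => exact ⟨1, fun s => by
      rw [poe_succ, poe_update_of_lt Y q s m.lt_succ_self, update_self, mul_one]⟩
  | succ n hn ih =>
    obtain ⟨T, hpoe⟩ := ih
    refine ⟨T * exp (q (n + 1) • Y (n + 1)), fun s => ?_⟩
    rw [poe_succ, hpoe, update_of_ne (by omega), mul_assoc]

theorem isUnit_conf {i : ℕ} (hA : IsUnit (A i).det) : IsUnit (conf Y A q i) :=
  (isUnit_poe Y q i).mul ((Matrix.isUnit_iff_isUnit_det _).mpr hA)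

theorem conf_update_of_lt {k j : ℕ} (s : ℝ) (hj : j < k) :
    conf Y A (update q k s) j = conf Y A q j := by
  rw [conf, conf, poe_update_of_lt Y q s hj]

def spatialScrew (j : ℕ) : Matrix (Fin 3 ⊕ Fin 1) (Fin 3 ⊕ Fin 1) ℝ :=
  conf Y A q j * (A j)⁻¹ * Y j * A j * (conf Y A q j)⁻¹

theorem Jb_eq_conf_inv_mul_spatialScrew_mul_conf (i j : ℕ) :
    Jb Y A q i j = (conf Y A q i)⁻¹ * spatialScrew Y A q j * conf Y A q i := by
  simp only [Jb, spatialScrew, mul_assoc]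

theorem spatialScrew_update_of_lt {k j : ℕ} (s : ℝ) (hj : j < k) :
    spatialScrew Y A (update q k s) j = spatialScrew Y A q j := by
  rw [spatialScrew, spatialScrew, conf_update_of_lt Y A q s hj]

theorem spatialScrew_succ {m : ℕ} (hA : IsUnit (A (m + 1)).det) :
    spatialScrew Y A q (m + 1) = poe Y q m * Y (m + 1) * (poe Y q m)⁻¹ := by
  have hE := (Matrix.isUnit_iff_isUnit_det _).mp (Matrix.isUnit_exp (q (m + 1) • Y (m + 1)))
  have hcomm : Commute (exp (q (m + 1) • Y (m + 1))) (Y (m + 1)) :=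
    ((Commute.refl _).smul_left _).exp_left
  simp only [spatialScrew, conf, poe_succ, Matrix.mul_inv_rev, mul_assoc,
    Matrix.mul_nonsing_inv_cancel_left _ _ hA]
  rw [hcomm.left_comm, Matrix.mul_nonsing_inv_cancel_left _ _ hE]

section Calculus

attribute [local instance] Matrix.linftyOpNormedAddCommGroup Matrix.linftyOpNormedRing
  Matrix.linftyOpNormedAlgebra

theorem hasDerivAt_conf_update {m i : ℕ} (hi : m < i) (t : ℝ) :
    HasDerivAt (fun s => conf Y A (update q (m + 1) s) i)
      (poe Y q m * Y (m + 1) * (poe Y q m)⁻¹ * conf Y A (update q (m + 1) t) i) t := by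
  obtain ⟨T, hpoe⟩ := exists_poe_update_eq Y q hi
  have hP := (Matrix.isUnit_iff_isUnit_det _).mp (isUnit_poe Y q m)
  simp only [conf, hpoe]
  refine (((hasDerivAt_exp_smul_const' (Y (m + 1)) t).const_mul _).mul_const _).mul_const _
    |>.congr_deriv ?_
  simp only [mul_assoc, Matrix.nonsing_inv_mul_cancel_left _ _ hP]
  -- the sides differ only in the multiplication instance (`Matrix` vs. the local normed ring)
  rfl

theorem hasDerivAt_conf_inv_mul_mul_conf_update_apply
    (S : Matrix (Fin 3 ⊕ Fin 1) (Fin 3 ⊕ Fin 1) ℝ) {m i : ℕ} (hA : IsUnit (A i).det) (hi : m < i)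
    (a b : Fin 3 ⊕ Fin 1) :
    HasDerivAt
      (fun s => ((conf Y A (update q (m + 1) s) i)⁻¹ * S * conf Y A (update q (m + 1) s) i) a b)
      (((conf Y A q i)⁻¹ * S * conf Y A q i
          * ((conf Y A q i)⁻¹ * (poe Y q m * Y (m + 1) * (poe Y q m)⁻¹) * conf Y A q i)
        - (conf Y A q i)⁻¹ * (poe Y q m * Y (m + 1) * (poe Y q m)⁻¹) * conf Y A q i
          * ((conf Y A q i)⁻¹ * S * conf Y A q i)) a b) (q (m + 1)) := by
  have h := (hasDerivAt_conf_update Y A q hi (q (m + 1))).ringInverse_mul_mul S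
    (isUnit_conf Y A _ hA)
  simp only [update_eq_self, ← Matrix.nonsing_inv_eq_ringInverse] at h
  exact (Matrix.entryLinearMap ℝ ℝ a b).toContinuousLinearMap.hasFDerivAt.comp_hasDerivAt _ h

end Calculus

end Screws

theorem partialDeriv_bodyJacobian_general (Y A : ℕ → Matrix (Fin 3 ⊕ Fin 1) (Fin 3 ⊕ Fin 1) ℝ)
    (hA : ∀ j, IsSE3Grp (A j))
    (q : ℕ → ℝ) (i j k : ℕ) (hjk : j < k) (hki : k ≤ i) :
    ∀ a b, HasDerivAt (fun s => Jb Y A (Function.update q k s) i j a b)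
      ((Jb Y A q i j * Jb Y A q i k - Jb Y A q i k * Jb Y A q i j) a b) (q k) := by
  intro a b
  obtain ⟨m, rfl⟩ : ∃ m, k = m + 1 := ⟨k - 1, by omega⟩
  have h := hasDerivAt_conf_inv_mul_mul_conf_update_apply Y A q (spatialScrew Y A q j)
    (hA i).isUnit_det hki a b
  rw [← spatialScrew_succ Y A q (hA (m + 1)).isUnit_det,
    ← Jb_eq_conf_inv_mul_spatialScrew_mul_conf, ← Jb_eq_conf_inv_mul_spatialScrew_mul_conf] at h
  convert h using 2 with s
  rw [Jb_eq_conf_inv_mul_spatialScrew_mul_conf, spatialScrew_update_of_lt Y A q s hjk]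

/-- `∂J^b_{i,j}/∂q_k = [J^b_{i,j}, J^b_{i,k}]` for `j < k ≤ i` (entrywise, at the
matrix level of `se(3)`). -/
theorem partialDeriv_bodyJacobian (Y A : ℕ → Matrix (Fin 3 ⊕ Fin 1) (Fin 3 ⊕ Fin 1) ℝ)
    (hY : ∀ j, IsSE3 (Y j)) (hA : ∀ j, IsSE3Grp (A j))
    (q : ℕ → ℝ) (i j k : ℕ) (hj : 1 ≤ j) (hjk : j < k) (hki : k ≤ i) :
    ∀ a b, HasDerivAt (fun s => Jb Y A (Function.update q k s) i j a b)
      ((Jb Y A q i j * Jb Y A q i k - Jb Y A q i k * Jb Y A q i j) a b) (q k) :=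
  partialDeriv_bodyJacobian_general Y A hA q i j k hjk hki
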